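/- (Correctness of the SAT encoding into AL.) Let φ be a Boolean propositional formula over propositional letters in Prop built only from the connectives ¬, ∧, ∨, and let φ^¬¬ be the PL formula obtained by replacing each propositional letter p in φ by ¬¬p and reading ¬, ∧, ∨ as the derived PL connectives. Then φ is satisfiable in classical Boolean semantics if and only if there exists a model M : Prop → [0,∞] with M(φ^¬¬) = 0 (i.e. the judgement ⊢ φ^¬¬ is satisfiable). -/
import Mathlib


open scoped NNReal ENNReal

/-- Formulas of polynomial Lawvere logic (PL). Propositional letters are
indexed by natural numbers. Scalars for scalar multiplication range over
`ℝ≥0`, i.e. the reals in `[0,∞)`. -/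
inductive PLForm : Type where
  | var : ℕ → PLForm
  | bot : PLForm
  | one : PLForm
  | tensor : PLForm → PLForm → PLForm
  | limp : PLForm → PLForm → PLForm
  | smul : ℝ≥0 → PLForm → PLForm
  | mul : PLForm → PLForm → PLForm

namespace PLForm

/-- ⊤ := ⊥ ⊸ ⊥ -/
def top : PLForm := limp bot bot
/-- ¬φ := φ ⊸ ⊥ -/
def neg (φ : PLForm) : PLForm := limp φ bot
/-- φ ∧ ψ := φ ⊗ (φ ⊸ ψ) -/
def conj (φ ψ : PLForm) : PLForm := tensor φ (limp φ ψ)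
/-- φ ∨ ψ := ((ψ⊸φ)⊸φ) ∧ ((φ⊸ψ)⊸ψ) -/
def disj (φ ψ : PLForm) : PLForm :=
  conj (limp (limp ψ φ) φ) (limp (limp φ ψ) ψ)
/-- φ ⊸⊸ ψ := (φ⊸ψ) ∧ (ψ⊸φ) -/
def dimp (φ ψ : PLForm) : PLForm := conj (limp φ ψ) (limp ψ φ)
/-- the constant formula r := r ∗ 𝟙 -/
def const (r : ℝ≥0) : PLForm := smul r one

/-- The `k`-fold tensor `φ ⊗ ⋯ ⊗ φ` (the empty tensor, for `k = 0`, is the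
constant formula `0`). -/
def ntimes : ℕ → PLForm → PLForm
  | 0, _ => const 0
  | 1, φ => φ
  | (n+2), φ => tensor φ (ntimes (n+1) φ)

/-- Interpretation of a formula in a model `M : Prop → [0,∞]`.  Subtraction on
`ℝ≥0∞` is truncated, and multiplication satisfies `0 * ∞ = 0`. -/
noncomputable def sem (M : ℕ → ℝ≥0∞) : PLForm → ℝ≥0∞
  | var p => M p
  | bot => ⊤
  | one => 1
  | tensor φ ψ => sem M φ + sem M ψ
  | limp φ ψ => sem M ψ - sem M φ
  | smul r φ => (r : ℝ≥0∞) * sem M φ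
  | mul φ ψ => sem M φ * sem M ψ

/-- Formulas in proper canonical form (PCF):
`θ ::= p | 𝟙 | r∗θ | θ⊗θ | θ⊸θ | θθ`. -/
inductive IsPCF : PLForm → Prop where
  | var (p : ℕ) : IsPCF (var p)
  | one : IsPCF one
  | smul (r : ℝ≥0) {φ : PLForm} : IsPCF φ → IsPCF (smul r φ)
  | tensor {φ ψ : PLForm} : IsPCF φ → IsPCF ψ → IsPCF (tensor φ ψ)
  | limp {φ ψ : PLForm} : IsPCF φ → IsPCF ψ → IsPCF (limp φ ψ)
  | mul {φ ψ : PLForm} : IsPCF φ → IsPCF ψ → IsPCF (mul φ ψ)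

/-- A formula is in canonical form (CF) if it is `⊥` or in PCF. -/
def IsCF (φ : PLForm) : Prop := φ = bot ∨ IsPCF φ

/-- Formulas in polynomial form: PCF with no occurrence of `⊸`. -/
inductive IsPolyForm : PLForm → Prop where
  | var (p : ℕ) : IsPolyForm (var p)
  | one : IsPolyForm one
  | smul (r : ℝ≥0) {φ : PLForm} : IsPolyForm φ → IsPolyForm (smul r φ)
  | tensor {φ ψ : PLForm} : IsPolyForm φ → IsPolyForm ψ → IsPolyForm (tensor φ ψ)
  | mul {φ ψ : PLForm} : IsPolyForm φ → IsPolyForm ψ → IsPolyForm (mul φ ψ)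

/-- Formulas in affine form: PCF with no occurrence of multiplication. -/
inductive IsAffineForm : PLForm → Prop where
  | var (p : ℕ) : IsAffineForm (var p)
  | one : IsAffineForm one
  | smul (r : ℝ≥0) {φ : PLForm} : IsAffineForm φ → IsAffineForm (smul r φ)
  | tensor {φ ψ : PLForm} : IsAffineForm φ → IsAffineForm ψ → IsAffineForm (tensor φ ψ)
  | limp {φ ψ : PLForm} : IsAffineForm φ → IsAffineForm ψ → IsAffineForm (limp φ ψ)

/-- Formulas of the affine fragment AL: no occurrence of multiplication. -/
inductive IsAL : PLForm → Prop where
  | var (p : ℕ) : IsAL (var p)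
  | bot : IsAL bot
  | one : IsAL one
  | smul (r : ℝ≥0) {φ : PLForm} : IsAL φ → IsAL (smul r φ)
  | tensor {φ ψ : PLForm} : IsAL φ → IsAL ψ → IsAL (tensor φ ψ)
  | limp {φ ψ : PLForm} : IsAL φ → IsAL ψ → IsAL (limp φ ψ)

/-- The polynomial `⟦θ⟧ : ℝⁿ → ℝ` associated with a formula in polynomial form
(the clauses for `⊥` and `⊸`, which do not appear in polynomial forms, are
irrelevant and set to `0`). -/
noncomputable def polySem (x : ℕ → ℝ) : PLForm → ℝ
  | var p => x p
  | bot => 0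
  | one => 1
  | tensor φ ψ => polySem x φ + polySem x ψ
  | limp _ _ => 0
  | smul r φ => (r : ℝ) * polySem x φ
  | mul φ ψ => polySem x φ * polySem x ψ

open Classical in
/-- The canonical form `φ^cf` of a formula `φ`. -/
noncomputable def cf : PLForm → PLForm
  | var p => var p
  | bot => bot
  | one => one
  | smul r φ =>
      if r = 0 then const 0
      else if cf φ = bot then bot
      else smul r (cf φ)
  | tensor φ ψ =>
      if cf φ = bot ∨ cf ψ = bot then bot
      else tensor (cf φ) (cf ψ)
  | limp φ ψ =>
      if cf φ = bot then const 0
      else if cf ψ = bot then bot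
      else limp (cf φ) (cf ψ)
  | mul φ ψ =>
      if cf φ = const 0 ∨ cf ψ = const 0 then const 0
      else if cf φ = bot ∨ cf ψ = bot then bot
      else mul (cf φ) (cf ψ)

/-- The set of propositional letters occurring in a formula. -/
def fvars : PLForm → Set ℕ
  | var p => {p}
  | bot => ∅
  | one => ∅
  | tensor φ ψ => fvars φ ∪ fvars ψ
  | limp φ ψ => fvars φ ∪ fvars ψ
  | smul _ φ => fvars φ
  | mul φ ψ => fvars φ ∪ fvars ψ

end PLForm

/-- A judgement `Γ ⊢ ψ`, where `Γ` is a finite (ordered) list of formulas. -/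
structure PLJudg : Type where
  ctx : List PLForm
  concl : PLForm

/-- `Γ ⊢ ψ` is satisfied by `M` iff `Σ_{φ ∈ Γ} M(φ) ≥ M(ψ)`. -/
def PLJudg.sat (M : ℕ → ℝ≥0∞) (J : PLJudg) : Prop :=
  PLForm.sem M J.concl ≤ (J.ctx.map (PLForm.sem M)).sum

/-- The set of propositional letters occurring in a judgement. -/
def PLJudg.fvars (J : PLJudg) : Set ℕ :=
  {p | (∃ φ ∈ J.ctx, p ∈ PLForm.fvars φ) ∨ p ∈ PLForm.fvars J.concl}

/-- Semantic consequence `S ⊨ γ`. -/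
def PLSemConseq (S : Set PLJudg) (γ : PLJudg) : Prop :=
  ∀ M : ℕ → ℝ≥0∞, (∀ J ∈ S, J.sat M) → γ.sat M

/-- Finite semantic consequence `S ⊨_f γ`: only finite models
`M : Prop → [0,∞)` are considered. -/
def PLFinSemConseq (S : Set PLJudg) (γ : PLJudg) : Prop :=
  ∀ M : ℕ → ℝ≥0∞, (∀ p, M p ≠ ⊤) → (∀ J ∈ S, J.sat M) → γ.sat M

/-- A set of judgements is f-satisfiable if some finite model
`M : Prop → [0,∞)` satisfies all its judgements. -/
def PLFSatisfiable (S : Set PLJudg) : Prop :=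
  ∃ M : ℕ → ℝ≥0∞, (∀ p, M p ≠ ⊤) ∧ ∀ J ∈ S, J.sat M

/-- `𝔉 = {⊢ ¬¬p : p ∈ Prop}` (finiteness assumptions). -/
def PLFinJudg : Set PLJudg :=
  {J | ∃ p : ℕ, J = ⟨[], PLForm.neg (PLForm.neg (PLForm.var p))⟩}

/-- `𝔓 = {⊢ ¬(p⊥) : p ∈ Prop}` (positivity assumptions). -/
def PLPosJudg : Set PLJudg :=
  {J | ∃ p : ℕ, J = ⟨[], PLForm.neg (PLForm.mul (PLForm.var p) PLForm.bot)⟩}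

/-- `𝔉𝔓 = 𝔉 ∪ 𝔓`. -/
def PLFinPosJudg : Set PLJudg := PLFinJudg ∪ PLPosJudg

/-- Provability in the natural deduction system for PL (Table 1 of the
paper): `PLProof S γ` means the judgement `γ` is provable from the set of
judgements `S`. -/
inductive PLProof (S : Set PLJudg) : PLJudg → Prop where
  /- hypotheses -/
  | hyp (J : PLJudg) : J ∈ S → PLProof S J
  /- 1. Logical deduction and structural rules -/
  | id (φ : PLForm) : PLProof S ⟨[φ], φ⟩
  | cut (Γ Δ : List PLForm) (φ ψ : PLForm) :
      PLProof S ⟨Γ, φ⟩ → PLProof S ⟨Δ ++ [φ], ψ⟩ → PLProof S ⟨Γ ++ Δ, ψ⟩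
  | weak (Γ : List PLForm) (φ ψ : PLForm) :
      PLProof S ⟨Γ, φ⟩ → PLProof S ⟨Γ ++ [ψ], φ⟩
  | perm (Γ Δ : List PLForm) (φ ψ θ : PLForm) :
      PLProof S ⟨Γ ++ [φ, ψ] ++ Δ, θ⟩ → PLProof S ⟨Γ ++ [ψ, φ] ++ Δ, θ⟩
  /- 2. Lattice rules -/
  | top (Γ : List PLForm) : PLProof S ⟨Γ, PLForm.top⟩
  | bot (φ : PLForm) : PLProof S ⟨[PLForm.bot], φ⟩
  | and1 (Γ : List PLForm) (φ ψ θ : PLForm) :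
      PLProof S ⟨Γ ++ [φ], θ⟩ → PLProof S ⟨Γ ++ [PLForm.conj φ ψ], θ⟩
  | and2 (Γ : List PLForm) (φ ψ : PLForm) :
      PLProof S ⟨Γ, φ⟩ → PLProof S ⟨Γ, ψ⟩ → PLProof S ⟨Γ, PLForm.conj φ ψ⟩
  | and3 (Γ : List PLForm) (φ ψ : PLForm) :
      PLProof S ⟨Γ, PLForm.conj φ ψ⟩ → PLProof S ⟨Γ, ψ⟩
  | or1 (Γ : List PLForm) (φ ψ θ : PLForm) :
      PLProof S ⟨Γ ++ [φ], θ⟩ → PLProof S ⟨Γ ++ [ψ], θ⟩ →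
      PLProof S ⟨Γ ++ [PLForm.disj φ ψ], θ⟩
  | or2 (Γ : List PLForm) (φ ψ : PLForm) :
      PLProof S ⟨Γ, φ⟩ → PLProof S ⟨Γ, PLForm.disj φ ψ⟩
  | or3 (Γ : List PLForm) (φ ψ θ : PLForm) :
      PLProof S ⟨Γ ++ [PLForm.disj φ ψ], θ⟩ → PLProof S ⟨Γ ++ [ψ], θ⟩
  /- 3. Lawvere quantale rules -/
  | wem (φ : PLForm) :
      PLProof S ⟨[], PLForm.disj (PLForm.neg φ) (PLForm.neg (PLForm.neg φ))⟩
  | tot (φ ψ : PLForm) :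
      PLProof S ⟨[], PLForm.disj (PLForm.limp φ ψ) (PLForm.limp ψ φ)⟩
  | tensor1a (Γ : List PLForm) (φ ψ θ : PLForm) :
      PLProof S ⟨Γ ++ [φ, ψ], θ⟩ → PLProof S ⟨Γ ++ [PLForm.tensor φ ψ], θ⟩
  | tensor1b (Γ : List PLForm) (φ ψ θ : PLForm) :
      PLProof S ⟨Γ ++ [PLForm.tensor φ ψ], θ⟩ → PLProof S ⟨Γ ++ [φ, ψ], θ⟩
  | tensor2a (Γ : List PLForm) (φ ψ θ : PLForm) :
      PLProof S ⟨Γ ++ [PLForm.tensor φ ψ], θ⟩ →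
      PLProof S ⟨Γ ++ [φ], PLForm.limp ψ θ⟩
  | tensor2b (Γ : List PLForm) (φ ψ θ : PLForm) :
      PLProof S ⟨Γ ++ [φ], PLForm.limp ψ θ⟩ →
      PLProof S ⟨Γ ++ [PLForm.tensor φ ψ], θ⟩
  | tensor3 (φ ψ : PLForm) :
      PLProof S ⟨[PLForm.tensor φ φ], PLForm.tensor ψ ψ⟩ → PLProof S ⟨[φ], ψ⟩
  | limp1 (Γ : List PLForm) (φ ψ θ : PLForm) :
      PLProof S ⟨Γ ++ [PLForm.limp φ θ], ψ⟩ → PLProof S ⟨[θ], φ⟩ →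
      PLProof S ⟨Γ ++ [θ], PLForm.tensor φ ψ⟩
  | limp2 (Γ : List PLForm) (φ ψ θ : PLForm) :
      PLProof S ⟨Γ ++ [θ], PLForm.tensor φ ψ⟩ →
      PLProof S ⟨[], PLForm.neg (PLForm.neg φ)⟩ →
      PLProof S ⟨Γ ++ [PLForm.limp φ θ], ψ⟩
  | limp3 (Γ : List PLForm) (φ ψ θ : PLForm) :
      PLProof S ⟨Γ ++ [θ], PLForm.tensor φ ψ⟩ →
      PLProof S ⟨[], PLForm.neg (PLForm.neg θ)⟩ →
      PLProof S ⟨Γ ++ [PLForm.limp φ θ], ψ⟩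
  | one :
      PLProof S ⟨[], PLForm.disj PLForm.one (PLForm.neg PLForm.one)⟩ →
      PLProof S ⟨[], PLForm.bot⟩
  /- 4. Product rules -/
  | p1 (r : ℝ≥0) (φ : PLForm) :
      PLProof S ⟨[], PLForm.dimp (PLForm.smul r φ) (PLForm.mul (PLForm.const r) φ)⟩
  | p2 (φ ψ θ : PLForm) :
      PLProof S ⟨[], PLForm.dimp (PLForm.mul φ (PLForm.mul ψ θ))
        (PLForm.mul (PLForm.mul φ ψ) θ)⟩
  | p3 (φ ψ : PLForm) :
      PLProof S ⟨[], PLForm.dimp (PLForm.mul φ ψ) (PLForm.mul ψ φ)⟩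
  | p4conj (θ φ ψ : PLForm) :
      PLProof S ⟨[], PLForm.dimp (PLForm.mul θ (PLForm.conj φ ψ))
        (PLForm.conj (PLForm.mul θ φ) (PLForm.mul θ ψ))⟩
  | p4disj (θ φ ψ : PLForm) :
      PLProof S ⟨[], PLForm.dimp (PLForm.mul θ (PLForm.disj φ ψ))
        (PLForm.disj (PLForm.mul θ φ) (PLForm.mul θ ψ))⟩
  | p4tensor (θ φ ψ : PLForm) :
      PLProof S ⟨[], PLForm.dimp (PLForm.mul θ (PLForm.tensor φ ψ))
        (PLForm.tensor (PLForm.mul θ φ) (PLForm.mul θ ψ))⟩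
  | p4limp (θ φ ψ : PLForm) :
      PLProof S ⟨[], PLForm.dimp (PLForm.mul θ (PLForm.limp φ ψ))
        (PLForm.limp (PLForm.mul θ φ) (PLForm.mul θ ψ))⟩
  | p5 (φ : PLForm) :
      PLProof S ⟨[], PLForm.dimp (PLForm.mul PLForm.one φ) φ⟩
  | p6 (φ : PLForm) :
      PLProof S ⟨[], PLForm.mul (PLForm.const 0) φ⟩
  | p7a (φ ψ : PLForm) :
      PLProof S ⟨[], PLForm.mul φ ψ⟩ → PLProof S ⟨[], PLForm.disj φ ψ⟩
  | p7b (φ ψ : PLForm) :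
      PLProof S ⟨[], PLForm.disj φ ψ⟩ → PLProof S ⟨[], PLForm.mul φ ψ⟩
  | p8 (φ ψ : PLForm) :
      PLProof S ⟨[PLForm.mul φ ψ], PLForm.one⟩ →
      PLProof S ⟨[PLForm.mul φ PLForm.bot], PLForm.bot⟩
  | p9add (r s : ℝ≥0) (φ : PLForm) :
      PLProof S ⟨[], PLForm.dimp (PLForm.smul (r + s) φ)
        (PLForm.tensor (PLForm.smul r φ) (PLForm.smul s φ))⟩
  | p9sub (r s : ℝ≥0) (φ : PLForm) :
      PLProof S ⟨[], PLForm.dimp (PLForm.smul (r - s) φ)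
        (PLForm.limp (PLForm.smul s φ) (PLForm.smul r φ))⟩
  | p9max (r s : ℝ≥0) (φ : PLForm) :
      PLProof S ⟨[], PLForm.dimp (PLForm.smul (max r s) φ)
        (PLForm.conj (PLForm.smul r φ) (PLForm.smul s φ))⟩
  | p9min (r s : ℝ≥0) (φ : PLForm) :
      PLProof S ⟨[], PLForm.dimp (PLForm.smul (min r s) φ)
        (PLForm.disj (PLForm.smul r φ) (PLForm.smul s φ))⟩

/-- Boolean propositional formulas built from `¬`, `∧`, `∨`. -/
inductive BForm : Type where
  | var : ℕ → BForm
  | not : BForm → BForm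
  | and : BForm → BForm → BForm
  | or : BForm → BForm → BForm

/-- Classical two-valued semantics of Boolean formulas. -/
def BForm.eval (v : ℕ → Bool) : BForm → Bool
  | var p => v p
  | not φ => !(eval v φ)
  | and φ ψ => eval v φ && eval v ψ
  | or φ ψ => eval v φ || eval v ψ

/-- The translation `φ ↦ φ^¬¬`: each propositional letter `p` is replaced by
`¬¬p`, and `¬`, `∧`, `∨` are read as the derived PL connectives. -/
def BForm.toPL : BForm → PLForm
  | var p => PLForm.neg (PLForm.neg (PLForm.var p))
  | not φ => PLForm.neg (toPL φ)
  | and φ ψ => PLForm.conj (toPL φ) (toPL ψ)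
  | or φ ψ => PLForm.disj (toPL φ) (toPL ψ)

lemma sem_toPL_eq (M : ℕ → ℝ≥0∞) (v : ℕ → Bool)
    (hv : ∀ p, M p = ⊤ ↔ v p = false) (φ : BForm) :
    PLForm.sem M (BForm.toPL φ) = if BForm.eval v φ then 0 else ⊤ := by
  induction φ with
  | var p =>
      rcases Bool.eq_false_or_eq_true (v p) with h | h
      · have hm : M p ≠ ⊤ := fun ht => by
          rw [(hv p).mp ht] at h; exact absurd h (by simp)
        simp [BForm.toPL, BForm.eval, PLForm.neg, PLForm.sem, h,
          ENNReal.top_sub hm, ENNReal.sub_top]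
      · have hm : M p = ⊤ := (hv p).mpr h
        simp [BForm.toPL, BForm.eval, PLForm.neg, PLForm.sem, h, hm]
  | not ψ ih =>
      rcases Bool.eq_false_or_eq_true (BForm.eval v ψ) with h | h <;>
        simp [BForm.toPL, BForm.eval, PLForm.neg, PLForm.sem, ih, h,
          ENNReal.sub_top]
  | and ψ θ ih1 ih2 =>
      rcases Bool.eq_false_or_eq_true (BForm.eval v ψ) with h1 | h1 <;>
      rcases Bool.eq_false_or_eq_true (BForm.eval v θ) with h2 | h2 <;>
        simp [BForm.toPL, BForm.eval, PLForm.conj, PLForm.sem, ih1, ih2,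
          h1, h2, ENNReal.sub_top]
  | or ψ θ ih1 ih2 =>
      rcases Bool.eq_false_or_eq_true (BForm.eval v ψ) with h1 | h1 <;>
      rcases Bool.eq_false_or_eq_true (BForm.eval v θ) with h2 | h2 <;>
        simp [BForm.toPL, BForm.eval, PLForm.disj, PLForm.conj, PLForm.sem,
          ih1, ih2, h1, h2, ENNReal.sub_top]

/-- Correctness of the SAT encoding into AL: a Boolean formula
`φ` is classically satisfiable iff the PL judgement `⊢ φ^¬¬` is satisfiable,
i.e. some model `M` gives `M(φ^¬¬) = 0`. -/
theorem SAT_encoding_correct (φ : BForm) :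
    (∃ v : ℕ → Bool, BForm.eval v φ = true) ↔
      (∃ M : ℕ → ℝ≥0∞, PLForm.sem M (BForm.toPL φ) = 0) := by
  constructor
  · rintro ⟨v, hv⟩
    refine ⟨fun p => if v p then 0 else ⊤, ?_⟩
    rw [sem_toPL_eq _ v (fun p => by
      rcases Bool.eq_false_or_eq_true (v p) with h | h <;> simp [h]), hv]
    simp
  · rintro ⟨M, hM⟩
    classical
    set v : ℕ → Bool := fun p => decide (M p ≠ ⊤) with hvdef
    have hv : ∀ p, M p = ⊤ ↔ v p = false := by
      intro p; simp [hvdef]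
    refine ⟨v, ?_⟩
    rw [sem_toPL_eq M v hv φ] at hM
    rcases Bool.eq_false_or_eq_true (BForm.eval v φ) with h | h
    · exact h
    · rw [h] at hM; simp at hM
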